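/- Let ρ be a density operator on the bipartite Hilbert space H = EuclideanSpace ℂ (Fin m × Fin n) (a positive semidefinite operator of trace one) that does not lie in the convex hull of the set of rank-one orthogonal projections onto unit product vectors. Then there exists a self-adjoint operator L on H such that tr(L ρ) > g_max(L), where g_max(L) is the supremum of ⟨a⊗b, L (a⊗b)⟩ over all pairs of unit vectors a, b. (Every entangled state is detected by some entanglement witness W = g_max·1 − L, i.e., criterion tr(Lρ) > g_max is necessary and sufficient for entanglement.) -/

import Mathlib

open scoped ComplexInnerProductSpace

/-- The product vector `a ⊗ b` in the bipartite space, `(a ⊗ b)(i, k) = a i * b k`. -/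
noncomputable def tp {m n : ℕ} (a : EuclideanSpace ℂ (Fin m)) (b : EuclideanSpace ℂ (Fin n)) :
    EuclideanSpace ℂ (Fin m × Fin n) :=
  WithLp.toLp 2 (fun p => a p.1 * b p.2)

/-!
The product projections `|a⊗b⟩⟨a⊗b|` form a compact set, the image of a product of two spheres,
so by Carathéodory their convex hull is compact and in particular closed. Hahn–Banach separates
`ρ` from it by a continuous `ℂ`-linear functional, which by trace duality is `T ↦ tr(A T)`. On
self-adjoint operators its real part agrees with that of `T ↦ tr(L T)` for the self-adjoint
`L = (A + A†)/2`, and `tr(L |v⟩⟨v|) = ⟨v, L v⟩`, so the separating level bounds `g_max(L)`.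
-/

open Set Function Module InnerProductSpace
open scoped InnerProductSpace ComplexStarModule

section ConvexHull

variable {V : Type*} [AddCommGroup V] [Module ℝ V] [FiniteDimensional ℝ V]

lemma exists_stdSimplex_sum_eq_of_mem_convexHull {s : Set V} {x : V} (hx : x ∈ convexHull ℝ s) :
    ∃ w ∈ stdSimplex ℝ (Fin (finrank ℝ V + 1)), ∃ z : Fin (finrank ℝ V + 1) → V,
      (∀ j, z j ∈ s) ∧ ∑ j, w j • z j = x := by
  obtain ⟨x₀, hx₀⟩ := convexHull_nonempty_iff.1 ⟨x, hx⟩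
  -- Carathéodory: at most `finrank + 1` affinely independent points; pad with weight `0` at `x₀`
  obtain ⟨ι, _, z, w, hzs, hz, hw0, hw1, hwz⟩ := eq_pos_convex_span_of_mem_convexHull hx
  obtain ⟨g⟩ : Nonempty (ι ↪ Fin (finrank ℝ V + 1)) :=
    Embedding.nonempty_of_card_le <| by
      simpa using hz.card_le_finrank_succ.trans (Nat.succ_le_succ (Submodule.finrank_le _))
  have hw_out : ∀ j ∉ range g, extend g w 0 j = 0 := fun j hj => extend_apply' _ _ _ hj
  refine ⟨extend g w 0, ⟨fun j => ?_, ?_⟩, extend g z fun _ => x₀, fun j => ?_, ?_⟩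
  · by_cases hj : j ∈ range g
    · obtain ⟨i, rfl⟩ := hj
      exact g.injective.extend_apply w 0 i ▸ (hw0 i).le
    · exact (hw_out j hj).ge
  · rw [← Fintype.sum_of_injective g g.injective _ _ hw_out fun _ => rfl]
    simpa only [g.injective.extend_apply] using hw1
  · by_cases hj : j ∈ range g
    · obtain ⟨i, rfl⟩ := hj
      exact g.injective.extend_apply z _ i ▸ hzs (mem_range_self i)
    · exact extend_apply' _ _ _ hj ▸ hx₀
  · rw [← Fintype.sum_of_injective g g.injective _ _ (fun j hj => by rw [hw_out j hj, zero_smul])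
      fun _ => rfl]
    simpa only [g.injective.extend_apply] using hwz

variable [TopologicalSpace V] [ContinuousAdd V] [ContinuousSMul ℝ V]

lemma IsCompact.convexHull {s : Set V} (hs : IsCompact s) : IsCompact (convexHull ℝ s) := by
  have hhull : _root_.convexHull ℝ s = (fun p => ∑ j, p.1 j • p.2 j) ''
      (stdSimplex ℝ (Fin (finrank ℝ V + 1)) ×ˢ univ.pi fun _ => s) := by
    refine Subset.antisymm (fun x hx => ?_) ?_
    · obtain ⟨w, hw, z, hz, rfl⟩ := exists_stdSimplex_sum_eq_of_mem_convexHull hx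
      exact ⟨(w, z), ⟨hw, fun j _ => hz j⟩, rfl⟩
    · rintro _ ⟨⟨w, z⟩, ⟨hw, hz⟩, rfl⟩
      exact (convex_convexHull ℝ s).sum_mem (fun j _ => hw.1 j) hw.2
        fun j _ => subset_convexHull ℝ s (hz j trivial)
  rw [hhull]
  exact ((isCompact_stdSimplex _ _).prod (isCompact_univ_pi fun _ => hs)).image (by fun_prop)

end ConvexHull

section Trace

variable {𝕜 E : Type*} [RCLike 𝕜] [NormedAddCommGroup E] [InnerProductSpace 𝕜 E]

lemma Submodule.starProjection_span_singleton_eq_rankOne {v : E} (hv : ‖v‖ = 1) :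
    (𝕜 ∙ v).starProjection = rankOne 𝕜 v v := by
  ext w
  rw [Submodule.starProjection_unit_singleton 𝕜 hv, rankOne_apply]

lemma continuous_rankOne_self : Continuous fun v : E => rankOne 𝕜 v v :=
  ((ContinuousLinearMap.smulRightL 𝕜 E E).continuous.comp (innerSL 𝕜).continuous).clm_apply
    continuous_id

variable [FiniteDimensional 𝕜 E]

lemma trace_comp_rankOne (L : E →L[𝕜] E) (x y : E) :
    LinearMap.trace 𝕜 E (L ∘L rankOne 𝕜 x y).toLinearMap = ⟪y, L x⟫_𝕜 := by
  rw [comp_rankOne, trace_rankOne]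

lemma exists_trace_comp_eq (f : Module.Dual 𝕜 (E →L[𝕜] E)) :
    ∃ A : E →L[𝕜] E, ∀ T, f T = LinearMap.trace 𝕜 E (A ∘L T).toLinearMap := by
  let Φ : (E →L[𝕜] E) →ₗ[𝕜] Module.Dual 𝕜 (E →L[𝕜] E) :=
    (LinearMap.mul 𝕜 _).compr₂ (LinearMap.trace 𝕜 E ∘ₗ ContinuousLinearMap.coeLM 𝕜)
  -- `Φ A` evaluated at `|x⟩⟨A x|` is `‖A x‖²`
  have hΦ : Injective Φ := by
    refine (injective_iff_map_eq_zero Φ).2 fun A hA => ContinuousLinearMap.ext fun x => ?_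
    have h := LinearMap.congr_fun hA (rankOne 𝕜 x (A x))
    simp only [Φ, LinearMap.compr₂_apply, LinearMap.mul_apply', LinearMap.coe_comp,
      comp_apply, ContinuousLinearMap.coeLM_apply, LinearMap.zero_apply] at h
    rwa [ContinuousLinearMap.mul_def, trace_comp_rankOne, inner_self_eq_zero] at h
  obtain ⟨A, hA⟩ := ((LinearMap.injective_iff_surjective_of_finrank_eq_finrank
    Subspace.dual_finrank_eq.symm).1 hΦ) f
  exact ⟨A, fun T => (LinearMap.congr_fun hA T).symm⟩

variable [CompleteSpace E]

lemma ContinuousLinearMap.trace_adjoint (T : E →L[𝕜] E) :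
    LinearMap.trace 𝕜 E (adjoint T).toLinearMap =
      starRingEnd 𝕜 (LinearMap.trace 𝕜 E T.toLinearMap) := by
  simp only [LinearMap.trace_eq_sum_inner _ (stdOrthonormalBasis 𝕜 E), map_sum, coe_coe,
    adjoint_inner_right, inner_conj_symm]

end Trace

section Separation

variable {E : Type*} [NormedAddCommGroup E] [InnerProductSpace ℂ E] [CompleteSpace E]
  [FiniteDimensional ℂ E]

lemma re_trace_realPart_comp {A T : E →L[ℂ] E} (hT : IsSelfAdjoint T) :
    (LinearMap.trace ℂ E ((ℜ A : E →L[ℂ] E) ∘L T).toLinearMap).re =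
      (LinearMap.trace ℂ E (A ∘L T).toLinearMap).re := by
  have hstar : LinearMap.trace ℂ E (star A ∘L T).toLinearMap =
      starRingEnd ℂ (LinearMap.trace ℂ E (A ∘L T).toLinearMap) := calc
    _ = LinearMap.trace ℂ E (ContinuousLinearMap.adjoint (T ∘L A)).toLinearMap := by
      rw [← ContinuousLinearMap.star_eq_adjoint, ← ContinuousLinearMap.mul_def T A, star_mul,
        hT.star_eq]
      rfl
    _ = _ := by
      rw [ContinuousLinearMap.trace_adjoint, ContinuousLinearMap.toLinearMap_comp,
        ContinuousLinearMap.toLinearMap_comp, LinearMap.trace_comp_comm']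
  rw [realPart_apply_coe, ← Complex.coe_smul, ContinuousLinearMap.smul_comp,
    ContinuousLinearMap.add_comp, ContinuousLinearMap.toLinearMap_smul,
    ContinuousLinearMap.toLinearMap_add, map_smul, map_add, hstar, Complex.add_conj, smul_eq_mul,
    ← Complex.ofReal_mul, Complex.ofReal_re, inv_mul_cancel_left₀ two_ne_zero]

lemma exists_isSelfAdjoint_separating_of_notMem_convexHull {S : Set (E →L[ℂ] E)}
    (hS : IsCompact S) (hS_sa : ∀ T ∈ S, IsSelfAdjoint T) {ρ : E →L[ℂ] E} (hρ : IsSelfAdjoint ρ)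
    (hρS : ρ ∉ convexHull ℝ S) :
    ∃ L : E →L[ℂ] E, IsSelfAdjoint L ∧ ∃ u : ℝ,
      (∀ T ∈ S, (LinearMap.trace ℂ E (L ∘L T).toLinearMap).re < u) ∧
        u < (LinearMap.trace ℂ E (L ∘L ρ).toLinearMap).re := by
  obtain ⟨f, u, hfS, hfρ⟩ := RCLike.geometric_hahn_banach_closed_point (𝕜 := ℂ)
    (convex_convexHull ℝ S) hS.convexHull.isClosed hρS
  obtain ⟨A, hA⟩ := exists_trace_comp_eq (f : Module.Dual ℂ (E →L[ℂ] E))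
  refine ⟨ℜ A, (ℜ A).2, u, fun T hT => ?_, ?_⟩
  · rw [re_trace_realPart_comp (hS_sa T hT), ← hA]
    exact hfS T (subset_convexHull ℝ S hT)
  · rwa [re_trace_realPart_comp hρ, ← hA]

end Separation

section ProductStates

def productProjections (m n : ℕ) :
    Set (EuclideanSpace ℂ (Fin m × Fin n) →L[ℂ] EuclideanSpace ℂ (Fin m × Fin n)) :=
  {T | ∃ (a : EuclideanSpace ℂ (Fin m)) (b : EuclideanSpace ℂ (Fin n)),
    ‖a‖ = 1 ∧ ‖b‖ = 1 ∧ T = (ℂ ∙ tp a b).starProjection}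

variable {m n : ℕ}

lemma norm_tp (a : EuclideanSpace ℂ (Fin m)) (b : EuclideanSpace ℂ (Fin n)) :
    ‖tp a b‖ = ‖a‖ * ‖b‖ := by
  rw [EuclideanSpace.norm_eq, EuclideanSpace.norm_eq, EuclideanSpace.norm_eq,
    ← Real.sqrt_mul (by positivity), Finset.sum_mul_sum, Fintype.sum_prod_type]
  simp [tp, mul_pow]

lemma continuous_tp :
    Continuous fun p : EuclideanSpace ℂ (Fin m) × EuclideanSpace ℂ (Fin n) => tp p.1 p.2 := by
  unfold tp
  fun_prop

lemma productProjections_eq_image :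
    productProjections m n = (fun p => rankOne ℂ (tp p.1 p.2) (tp p.1 p.2)) ''
      (Metric.sphere 0 1 ×ˢ Metric.sphere 0 1) := by
  ext T
  simp only [productProjections, mem_ofPred_eq, mem_image, Prod.exists, mem_prod,
    mem_sphere_zero_iff_norm, and_assoc]
  refine exists₂_congr fun a b => and_congr_right fun ha => and_congr_right fun hb => ?_
  rw [Submodule.starProjection_span_singleton_eq_rankOne (by rw [norm_tp, ha, hb, one_mul]),
    eq_comm]

lemma isCompact_productProjections : IsCompact (productProjections m n) := by
  rw [productProjections_eq_image]
  exact ((isCompact_sphere _ _).prod (isCompact_sphere _ _)).image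
    (continuous_rankOne_self.comp continuous_tp)

end ProductStates

theorem entangled_state_detected_general {m n : ℕ} (hm : 1 ≤ m) (hn : 1 ≤ n)
    (ρ : EuclideanSpace ℂ (Fin m × Fin n) →L[ℂ] EuclideanSpace ℂ (Fin m × Fin n))
    (hρsa : IsSelfAdjoint ρ)
    (hent : ρ ∉ convexHull ℝ
      {T : EuclideanSpace ℂ (Fin m × Fin n) →L[ℂ] EuclideanSpace ℂ (Fin m × Fin n) |
        ∃ (a : EuclideanSpace ℂ (Fin m)) (b : EuclideanSpace ℂ (Fin n)),
          ‖a‖ = 1 ∧ ‖b‖ = 1 ∧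
          T = (ℂ ∙ tp a b).subtypeL ∘L (ℂ ∙ tp a b).orthogonalProjection}) :
    ∃ L : EuclideanSpace ℂ (Fin m × Fin n) →L[ℂ] EuclideanSpace ℂ (Fin m × Fin n),
      IsSelfAdjoint L ∧
      sSup {r : ℝ | ∃ (a : EuclideanSpace ℂ (Fin m)) (b : EuclideanSpace ℂ (Fin n)),
          ‖a‖ = 1 ∧ ‖b‖ = 1 ∧ r = (⟪tp a b, L (tp a b)⟫).re}
        < (LinearMap.trace ℂ _ (L ∘L ρ).toLinearMap).re := by
  obtain ⟨L, hL, u, hLS, hLρ⟩ := exists_isSelfAdjoint_separating_of_notMem_convexHull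
    isCompact_productProjections
    (fun _ ⟨_, _, _, _, hT⟩ => hT ▸ isSelfAdjoint_starProjection _) hρsa hent
  refine ⟨L, hL, (csSup_le ?_ ?_).trans_lt hLρ⟩
  · exact ⟨_, EuclideanSpace.single ⟨0, hm⟩ 1, EuclideanSpace.single ⟨0, hn⟩ 1, by simp, by simp,
      rfl⟩
  · rintro _ ⟨a, b, ha, hb, rfl⟩
    have hunit : ‖tp a b‖ = 1 := by rw [norm_tp, ha, hb, one_mul]
    have h := hLS _ ⟨a, b, ha, hb, rfl⟩
    rw [Submodule.starProjection_span_singleton_eq_rankOne hunit, trace_comp_rankOne] at h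
    exact h.le

/-- **Every entangled state is detected by some witness.**  Let `ρ` be a density operator
on the bipartite space (self-adjoint, positive semidefinite, trace one) that does not lie
in the convex hull of rank-one orthogonal projections onto unit product vectors.  Then
there is a self-adjoint operator `L` with `tr(L ρ) > g_max(L)`, where `g_max(L)` is the
supremum of `⟨a⊗b, L (a⊗b)⟩` over pairs of unit vectors. -/
theorem entangled_state_detected {m n : ℕ} (hm : 1 ≤ m) (hn : 1 ≤ n)
    (ρ : EuclideanSpace ℂ (Fin m × Fin n) →L[ℂ] EuclideanSpace ℂ (Fin m × Fin n))
    (hρsa : IsSelfAdjoint ρ)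
    (hρpos : ∀ x : EuclideanSpace ℂ (Fin m × Fin n), 0 ≤ (⟪x, ρ x⟫).re)
    (hρtr : LinearMap.trace ℂ _ ρ.toLinearMap = 1)
    (hent : ρ ∉ convexHull ℝ
      {T : EuclideanSpace ℂ (Fin m × Fin n) →L[ℂ] EuclideanSpace ℂ (Fin m × Fin n) |
        ∃ (a : EuclideanSpace ℂ (Fin m)) (b : EuclideanSpace ℂ (Fin n)),
          ‖a‖ = 1 ∧ ‖b‖ = 1 ∧
          T = (ℂ ∙ tp a b).subtypeL ∘L (ℂ ∙ tp a b).orthogonalProjection}) :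
    ∃ L : EuclideanSpace ℂ (Fin m × Fin n) →L[ℂ] EuclideanSpace ℂ (Fin m × Fin n),
      IsSelfAdjoint L ∧
      sSup {r : ℝ | ∃ (a : EuclideanSpace ℂ (Fin m)) (b : EuclideanSpace ℂ (Fin n)),
          ‖a‖ = 1 ∧ ‖b‖ = 1 ∧ r = (⟪tp a b, L (tp a b)⟫).re}
        < (LinearMap.trace ℂ _ (L ∘L ρ).toLinearMap).re :=
  entangled_state_detected_general hm hn ρ hρsa hent
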